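/- arXiv:0903.2494 — 2 statements merged into one kernel-verified Lean document; each statement's English description precedes it below -/
import Mathlib

section
/- Let p be an odd prime, let λ be a symmetric partition with empty p-core, let X be a β-set for λ with |X| ≡ 0 (mod p), and let θ = θ(X). Suppose y = γ + (k−1)p ∉ X and x = γ + kp ∈ X for some 0 ≤ γ ≤ p − 1 and k ≥ 1, so (y,x) is a p-hook of X and (k−1, k) is a hook of the induced β-set X_γ, corresponding to a node (i,j) of the Young diagram of λ_γ (with i = #{z ∈ X_γ : z ≥ k} and j = #{z ∈ ℕ : z ∉ X_γ, z ≤ k−1}). Then y < θ < x (the p-hook straddles θ) if and only if i = j (the node is a diagonal node of λ_γ). -/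
/-- A partition of a natural number, given as a weakly decreasing,
eventually-zero sequence of parts (0-indexed: `parts i` is the (i+1)-st part). -/
structure NPartition where
  parts : ℕ → ℕ
  antitone : ∀ ⦃i j : ℕ⦄, i ≤ j → parts j ≤ parts i
  finite_support : ∃ N : ℕ, ∀ n : ℕ, N ≤ n → parts n = 0

/-- The conjugate (dual) partition: `conj j` is the (j+1)-st part of `λ*`,
i.e. the number of indices `i` with `parts i > j`. -/
noncomputable def NPartition.conj (μ : NPartition) (j : ℕ) : ℕ :=
  Nat.card {i : ℕ // j < μ.parts i}

/-- A partition is symmetric if it equals its conjugate. -/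
def IsSymmetric (μ : NPartition) : Prop := ∀ j : ℕ, μ.conj j = μ.parts j

/-- `X` is a β-set for `μ`: if `X = {x_1 < … < x_k}` then the parts of `μ`
are `λ_i = x_{k+1−i} − (k − i)` (discarding zero parts); equivalently the
elements of `X` are exactly `parts i + (card X − 1 − i)` for `i < card X`. -/
def IsBetaSet (X : Finset ℕ) (μ : NPartition) : Prop :=
  ∀ n : ℕ, n ∈ X ↔ ∃ i : ℕ, i < X.card ∧ n + i + 1 = μ.parts i + X.card

/-- A hook of a β-set `X`: a pair `(y, x)` with `y ∉ X`, `x ∈ X`, `y < x`. -/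
def IsBetaHook (X : Finset ℕ) (y x : ℕ) : Prop := y ∉ X ∧ x ∈ X ∧ y < x

/-- `θ(X) = t + 1/2`: the number of beads of `X` strictly to the right of `t`
equals the number of spaces (nonnegative integers not in `X`) at positions `≤ t`. -/
def IsTheta (X : Finset ℕ) (t : ℤ) : Prop :=
  -1 ≤ t ∧ (X.filter (fun x : ℕ => t < (x : ℤ))).card =
    ((Finset.range (t + 1).toNat).filter (fun y => y ∉ X)).card

/-- Removing one hook `(y, x)` from the β-set `X` yields `X'`. -/
def RemoveHook (X X' : Finset ℕ) : Prop :=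
  ∃ y x : ℕ, y ∉ X ∧ x ∈ X ∧ y < x ∧ X' = insert y (X.erase x)

/-- Removing one hook of length `p` from the β-set `X` yields `X'`. -/
def RemovePHook (p : ℕ) (X X' : Finset ℕ) : Prop :=
  ∃ y x : ℕ, y ∉ X ∧ x ∈ X ∧ y + p = x ∧ X' = insert y (X.erase x)

/-- The partition represented by `X` has empty `p`-core: `X` can be reduced by
successive removals of `p`-hooks to the β-set `{0, 1, …, card X − 1}` of `∅`. -/
def HasEmptyPCore (p : ℕ) (X : Finset ℕ) : Prop :=
  Relation.ReflTransGen (RemovePHook p) X (Finset.range X.card)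

/-- The induced β-set on runner `γ`: `X_γ = {j : γ + j·p ∈ X}`. -/
def runner (p γ : ℕ) (X : Finset ℕ) : Finset ℕ :=
  (X.filter (fun x => x % p = γ)).image (fun x => x / p)

/-- The set of arm lengths of the diagonal hooks `h_{ii}` of `μ`. -/
def diagArms (μ : NPartition) : Set ℕ :=
  {a | ∃ d : ℕ, d < μ.parts d ∧ a + d + 1 = μ.parts d}

/-- The set of leg lengths of the diagonal hooks `h_{ii}` of `μ`. -/
def diagLegs (μ : NPartition) : Set ℕ :=
  {l | ∃ d : ℕ, d < μ.parts d ∧ l + d + 1 = μ.conj d}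

/-- `δ(μ)`: the set of hook lengths of the diagonal hooks of `μ`. -/
def diagHookLengths (μ : NPartition) : Set ℕ :=
  {e | ∃ d : ℕ, d < μ.parts d ∧ e + 2 * d + 1 = μ.parts d + μ.conj d}

/-- `(x', x)` is a diagonal hook of the β-set `X`: a hook which corresponds to a
hook `h_{ii}` on the diagonal of the Young diagram under the standard bijection. -/
def IsDiagHook (X : Finset ℕ) (x' x : ℕ) : Prop :=
  IsBetaHook X x' x ∧
  (X.filter (fun z => x ≤ z)).card =
    ((Finset.range (x' + 1)).filter (fun z => z ∉ X)).card

/-- `μ` is concentrated at `{γ, γ*}` (`γ* = p − 1 − γ`): every diagonal hook of `μ`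
has arm length congruent to `γ` or `γ*` modulo `p`. -/
def ConcentratedAt (p γ : ℕ) (μ : NPartition) : Prop :=
  ∀ a ∈ diagArms μ, a % p = γ ∨ a % p = p - 1 - γ

/-- `μ` is a `p`-core: no hook of its Young diagram has length `p`
(the hook at node `(i,j)`, 0-indexed, has length `parts i + conj j − i − j − 1`). -/
def IsPCore (p : ℕ) (μ : NPartition) : Prop :=
  ∀ i j : ℕ, j < μ.parts i → μ.parts i + μ.conj j ≠ p + i + j + 1

/-- `μ` is `γ`-packed: the set of arm lengths of diagonal hooks of `μ` congruent to
`γ` mod `p` is exactly `{γ + i·p : 0 ≤ i ≤ r}` for some `r ≥ 0`. -/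
def GammaPacked (p γ : ℕ) (μ : NPartition) : Prop :=
  ∃ r : ℕ, {a | a ∈ diagArms μ ∧ a % p = γ} = {a : ℕ | ∃ i ≤ r, a = γ + i * p}

/-- The β-set `X` admits no `p`-hook. -/
def NoPHooks (p : ℕ) (X : Finset ℕ) : Prop := ¬ ∃ X' : Finset ℕ, RemovePHook p X X'

/-- `μ0` is the `p`-core of the partition with β-set `X`: it is represented by a
β-set obtained from `X` by repeatedly removing `p`-hooks until none remain. -/
def IsPCoreOf (p : ℕ) (X : Finset ℕ) (μ0 : NPartition) : Prop :=
  ∃ X0 : Finset ℕ, Relation.ReflTransGen (RemovePHook p) X X0 ∧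
    NoPHooks p X0 ∧ IsBetaSet X0 μ0

/-!
Only the bead count matters. Since `θ(X) = |X| − 1/2`, the hook `(γ + kp, γ + (k+1)p)` straddles `θ`
exactly when `|X| = (k+1)p`. Removing a `p`-hook slides a bead along its runner, so each runner keeps
its number of beads; as `X` reduces to `{0, …, |X| − 1}` and `p ∣ |X|`, every runner carries
`|X|/p` beads. Finally, for any finite `R ⊆ ℕ` the counts `i = #{z ∈ R : z > k}` and
`j = #{z ≤ k : z ∉ R}` satisfy `i + (k+1) = |R| + j`, so `i = j` is again `|X|/p = k + 1`.
-/

open Finset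

theorem card_filter_le_add_eq (X : Finset ℕ) (n : ℕ) :
    #(X.filter (n ≤ ·)) + n = #X + #((range n).filter (· ∉ X)) := by
  have hlow : X.filter (¬ n ≤ ·) = (range n).filter (¬ · ∉ X) := by
    ext z
    simp only [mem_filter, mem_range, not_le, not_not]
    tauto
  have hX := card_filter_add_card_filter_not (s := X) (n ≤ ·)
  have hrange := card_filter_add_card_filter_not (s := range n) (· ∉ X)
  rw [card_range] at hrange
  rw [hlow] at hX
  omega

theorem IsTheta.add_one_eq_card {X : Finset ℕ} {t : ℤ} (h : IsTheta X t) : t + 1 = #X := by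
  obtain ⟨ht, hcount⟩ := h
  have hn : ((t + 1).toNat : ℤ) = t + 1 := Int.toNat_of_nonneg (by omega)
  have hbeads : X.filter (fun x : ℕ => t < x) = X.filter ((t + 1).toNat ≤ ·) := by
    ext z
    simp only [mem_filter, and_congr_right_iff]
    intro
    omega
  have := card_filter_le_add_eq X (t + 1).toNat
  rw [hbeads] at hcount
  omega

theorem card_runner (p γ : ℕ) (X : Finset ℕ) :
    #(runner p γ X) = #(X.filter (· % p = γ)) := by
  refine card_image_of_injOn fun a ha b hb hab => ?_
  simp only [coe_filter, Set.mem_ofPred_eq] at ha hb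
  rw [← Nat.div_add_mod a p, ← Nat.div_add_mod b p, ha.2, hb.2, hab]

theorem RemovePHook.card_filter_mod_eq {p γ : ℕ} {X X' : Finset ℕ} (h : RemovePHook p X X') :
    #(X'.filter (· % p = γ)) = #(X.filter (· % p = γ)) := by
  obtain ⟨y, x, hy, hx, rfl, rfl⟩ := h
  rw [filter_insert, filter_erase]
  by_cases hγ : y % p = γ
  · have hxγ : y + p ∈ X.filter (· % p = γ) := mem_filter.2 ⟨hx, by simpa using hγ⟩
    rw [if_pos hγ, card_insert_of_notMem fun h => hy (mem_filter.1 (mem_of_mem_erase h)).1,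
      card_erase_add_one hxγ]
  · rw [if_neg hγ, erase_eq_of_notMem fun h => hγ (by simpa using (mem_filter.1 h).2)]

theorem card_runner_eq_of_reflTransGen {p γ : ℕ} {X Y : Finset ℕ}
    (h : Relation.ReflTransGen (RemovePHook p) X Y) : #(runner p γ Y) = #(runner p γ X) := by
  simp only [card_runner]
  induction h with
  | refl => rfl
  | tail _ hstep ih => exact hstep.card_filter_mod_eq.trans ih

theorem add_mul_lt_mul_iff_of_lt {γ p : ℕ} (hγ : γ < p) (k m : ℕ) :
    γ + k * p < m * p ↔ k < m := by
  constructor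
  · intro h
    exact Nat.lt_of_mul_lt_mul_right (by omega : k * p < m * p)
  · intro h
    nlinarith [Nat.mul_le_mul_right p (h : k + 1 ≤ m)]

theorem runner_range_mul {p γ : ℕ} (hγ : γ < p) (m : ℕ) :
    runner p γ (range (m * p)) = range m := by
  ext z
  simp only [runner, mem_image, mem_filter, mem_range]
  constructor
  · rintro ⟨x, ⟨hx, -⟩, rfl⟩
    exact Nat.div_lt_of_lt_mul (by rwa [mul_comm])
  · intro hz
    refine ⟨γ + z * p, ⟨(add_mul_lt_mul_iff_of_lt hγ z m).2 hz, ?_⟩, ?_⟩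
    · rw [Nat.add_mul_mod_self_right, Nat.mod_eq_of_lt hγ]
    · rw [Nat.add_mul_div_right _ _ (by omega), Nat.div_eq_of_lt hγ, zero_add]

theorem HasEmptyPCore.card_runner_mul {p γ : ℕ} {X : Finset ℕ} (h : HasEmptyPCore p X)
    (hγ : γ < p) (hdvd : p ∣ #X) : #(runner p γ X) * p = #X := by
  obtain ⟨m, hm⟩ := hdvd
  rw [← card_runner_eq_of_reflTransGen h, hm, mul_comm p m, runner_range_mul hγ, card_range]

theorem stmt10_general (p : ℕ)
    (X : Finset ℕ) (t : ℤ)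
    (hcore : HasEmptyPCore p X)
    (hcard : X.card % p = 0) (ht : IsTheta X t)
    (γ k : ℕ) (hγ : γ < p)
    (i j : ℕ)
    (hi : i = ((runner p γ X).filter (fun z => k + 1 ≤ z)).card)
    (hj : j = ((Finset.range (k + 1)).filter (fun z => z ∉ runner p γ X)).card) :
    (((γ + k * p : ℕ) : ℤ) ≤ t ∧ t < ((γ + (k + 1) * p : ℕ) : ℤ)) ↔ i = j := by
  have htheta : t + 1 = #X := ht.add_one_eq_card
  have hbeads : #(runner p γ X) * p = #X :=
    hcore.card_runner_mul hγ (Nat.dvd_of_mod_eq_zero hcard)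
  have hnode : i + (k + 1) = #(runner p γ X) + j :=
    hi ▸ hj ▸ card_filter_le_add_eq (runner p γ X) (k + 1)
  have hleft := add_mul_lt_mul_iff_of_lt hγ k #(runner p γ X)
  have hright := add_mul_lt_mul_iff_of_lt hγ (k + 1) #(runner p γ X)
  omega

/-- (here the `p`-hook is `(y, x) = (γ + k·p, γ + (k+1)·p)`,
corresponding to the hook `(k, k+1)` of `X_γ` and the node `(i, j)` of `λ_γ`).
The `p`-hook straddles `θ` (i.e. `y < θ < x`) iff the node is diagonal (`i = j`). -/
theorem stmt10 (p : ℕ) (hp : p.Prime) (hodd : Odd p)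
    (X : Finset ℕ) (μ : NPartition) (t : ℤ)
    (hX : IsBetaSet X μ) (hsym : IsSymmetric μ) (hcore : HasEmptyPCore p X)
    (hcard : X.card % p = 0) (ht : IsTheta X t)
    (γ k : ℕ) (hγ : γ < p)
    (hy : γ + k * p ∉ X) (hx : γ + (k + 1) * p ∈ X)
    (i j : ℕ)
    (hi : i = ((runner p γ X).filter (fun z => k + 1 ≤ z)).card)
    (hj : j = ((Finset.range (k + 1)).filter (fun z => z ∉ runner p γ X)).card) :
    (((γ + k * p : ℕ) : ℤ) ≤ t ∧ t < ((γ + (k + 1) * p : ℕ) : ℤ)) ↔ i = j :=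
  stmt10_general p X t hcore hcard ht γ k hγ i j hi hj
end

section
/- Let p be an odd prime and write γ* = p − 1 − γ. A symmetric partition λ is a p-core if and only if for every γ with 0 ≤ γ ≤ p − 1 the following holds: if λ has a diagonal hook whose arm length is congruent to γ modulo p, then λ is γ-packed and λ has no diagonal hook whose arm length is congruent to γ* modulo p. -/
/-!
For symmetric `λ` put `S = {λ_i - i - 1 : i ∈ ℕ} ⊆ ℤ`; the diagonal arms are `S ∩ ℕ`, and symmetry
says `y ∈ S ↔ -1 - y ∉ S`. A hook of length `p` joining rows `i` and `j` means
`(λ_i - i - 1) + (λ_j - j - 1) = p - 1`, so by the symmetry of `S` it exists exactly when some arm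
`a + p` lies above a non-arm `a`, or two arms add up to `p - 1`. Excluding the first is packedness
of every occupied runner; given that, excluding the second says runners `γ` and `γ*` are never
both occupied.
-/

/-- `GammaPacked p γ μ` is `IsPacked p γ (diagArms μ)`. -/
def IsPacked (p γ : ℕ) (A : Set ℕ) : Prop :=
  ∃ r : ℕ, {a | a ∈ A ∧ a % p = γ} = {a : ℕ | ∃ i ≤ r, a = γ + i * p}

section Packing

variable {p γ : ℕ} {A : Set ℕ}

lemma mem_of_add_mul_mem (hA : ∀ a, a + p ∈ A → a ∈ A) {a : ℕ} :
    ∀ k : ℕ, a + k * p ∈ A → a ∈ A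
  | 0, h => by simpa using h
  | k + 1, h => mem_of_add_mul_mem hA k (hA _ (by rwa [add_assoc, ← Nat.succ_mul]))

lemma isPacked_of_mem (hA : ∀ a, a + p ∈ A → a ∈ A) (hfin : A.Finite) (hγ : γ < p)
    (h : γ ∈ A) : IsPacked p γ A := by
  classical
  obtain ⟨N, hN⟩ := hfin.bddAbove
  have hex : ∃ r, γ + (r + 1) * p ∉ A := ⟨N, fun hmem => by have := hN hmem; nlinarith⟩
  refine ⟨Nat.find hex, Set.ext fun a => ⟨?_, ?_⟩⟩
  · rintro ⟨ha, rfl⟩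
    refine ⟨a / p, ?_, (Nat.mod_add_div' a p).symm⟩
    by_contra! hlt
    refine Nat.find_spec hex (mem_of_add_mul_mem hA (a / p - (Nat.find hex + 1)) ?_)
    rwa [add_assoc, ← add_mul, Nat.add_sub_cancel' hlt, Nat.mod_add_div']
  · rintro ⟨i, hi, rfl⟩
    refine ⟨?_, by rw [Nat.add_mul_mod_self_right, Nat.mod_eq_of_lt hγ]⟩
    cases i with
    | zero => simpa using h
    | succ i => exact not_not.mp (Nat.find_min hex (by omega))

lemma mem_of_add_mem_of_isPacked (hp : 0 < p)
    (hpack : ∀ γ < p, (∃ a ∈ A, a % p = γ) → IsPacked p γ A) {a : ℕ} (ha : a + p ∈ A) :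
    a ∈ A := by
  have hmod : (a + p) % p = a % p := Nat.add_mod_right a p
  obtain ⟨r, hr⟩ := hpack (a % p) (Nat.mod_lt a hp) ⟨a + p, ha, hmod⟩
  obtain ⟨i, hi, hai⟩ : a + p ∈ {x | ∃ i ≤ r, x = a % p + i * p} := hr ▸ ⟨ha, hmod⟩
  have hquot : a / p + 1 = i := by
    refine Nat.eq_of_mul_eq_mul_right hp ?_
    have := Nat.mod_add_div' a p
    rw [add_mul]
    omega
  have : a ∈ {x | x ∈ A ∧ x % p = a % p} :=
    hr ▸ ⟨a / p, by omega, (Nat.mod_add_div' a p).symm⟩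
  exact this.1

theorem forall_isPacked_iff (hp : 0 < p) (hfin : A.Finite) :
    (∀ γ < p, (∃ a ∈ A, a % p = γ) → IsPacked p γ A ∧ ∀ a ∈ A, a % p ≠ p - 1 - γ) ↔
      (∀ a, a + p ∈ A → a ∈ A) ∧ ∀ a ∈ A, ∀ b ∈ A, a + b + 1 ≠ p := by
  constructor
  · intro hpack
    refine ⟨fun a => mem_of_add_mem_of_isPacked hp fun γ hγ h => (hpack γ hγ h).1, ?_⟩
    intro a ha b hb hab
    have hap : a % p = a := Nat.mod_eq_of_lt (by omega)
    have hbp : b % p = b := Nat.mod_eq_of_lt (by omega)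
    exact (hpack a (by omega) ⟨a, ha, hap⟩).2 b hb (by omega)
  · rintro ⟨hA, hpair⟩ γ hγ ⟨a, ha, rfl⟩
    have hmod_mem {b : ℕ} (hb : b ∈ A) : b % p ∈ A :=
      mem_of_add_mul_mem hA (b / p) (by rwa [Nat.mod_add_div'])
    refine ⟨isPacked_of_mem hA hfin hγ (hmod_mem ha), fun b hb hab => ?_⟩
    exact hpair _ (hmod_mem ha) _ (hmod_mem hb) (by omega)

end Packing

namespace NPartition

lemma lt_conj_iff (μ : NPartition) (i j : ℕ) : i < μ.conj j ↔ j < μ.parts i := by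
  have hex : ∃ n, μ.parts n ≤ j := by
    obtain ⟨N, hN⟩ := μ.finite_support
    exact ⟨N, by simp [hN N le_rfl]⟩
  have hrows : {i | j < μ.parts i} = Set.Iio (Nat.find hex) := by
    ext n
    simp only [Set.mem_ofPred_eq, Set.mem_Iio, Nat.lt_find_iff, not_le]
    exact ⟨fun h m hm => h.trans_le (μ.antitone hm), fun h => h n le_rfl⟩
  have hconj : μ.conj j = Nat.find hex := by
    rw [conj, ← Set.coe_ofPred, hrows, Nat.card_coe_set_eq, Set.ncard_Iio_nat]
  rw [hconj, ← Set.mem_Iio, ← hrows, Set.mem_ofPred_eq]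

lemma diagArms_finite (μ : NPartition) : (diagArms μ).Finite :=
  (Set.finite_Iio (μ.parts 0)).subset fun a ⟨d, _, hd⟩ => by
    have := μ.antitone (Nat.zero_le d)
    simp only [Set.mem_Iio]
    omega

end NPartition

namespace IsSymmetric

variable {μ : NPartition}

lemma lt_parts_comm (hsym : IsSymmetric μ) {i j : ℕ} : j < μ.parts i ↔ i < μ.parts j := by
  rw [← μ.lt_conj_iff, hsym]

lemma mem_diagArms_iff (hsym : IsSymmetric μ) {a : ℕ} :
    a ∈ diagArms μ ↔ ∀ m, μ.parts (a + m) ≠ m := by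
  constructor
  · rintro ⟨d, -, hd⟩ m hm
    rcases le_or_gt m d with h | h
    · have := hsym.lt_parts_comm.mp (show a + m < μ.parts d by omega)
      omega
    · have := hsym.lt_parts_comm.mp (show d < μ.parts (a + m) by omega)
      omega
  · intro hne
    have hex : ∃ m, μ.parts (a + m) ≤ m := by
      obtain ⟨N, hN⟩ := μ.finite_support
      exact ⟨N, by rw [hN _ (by omega)]; omega⟩
    obtain ⟨m, hm⟩ : ∃ m, Nat.find hex = m + 1 := Nat.exists_eq_succ_of_ne_zero fun h0 =>
      hne 0 (by have := Nat.find_spec hex; rw [h0] at this; omega)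
    have hbelow : m < μ.parts (a + m) := not_le.mp (Nat.find_min hex (by omega))
    have habove : μ.parts (a + (m + 1)) ≤ m + 1 := hm ▸ Nat.find_spec hex
    have hne' := hne (m + 1)
    have h1 : a + m < μ.parts m := hsym.lt_parts_comm.mp hbelow
    have h2 : ¬ a + (m + 1) < μ.parts m := fun h => by
      have := hsym.lt_parts_comm.mp h
      omega
    exact ⟨m, by omega, by omega⟩

lemma isPCore_iff (hsym : IsSymmetric μ) {p : ℕ} :
    IsPCore p μ ↔ ∀ i j, μ.parts i + μ.parts j ≠ p + i + j + 1 := by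
  refine ⟨fun h i j hij => ?_, fun h i j _ => by rw [hsym j]; exact h i j⟩
  rcases lt_or_ge j (μ.parts i) with hj | hj
  · exact h i j hj (by rw [hsym j]; exact hij)
  · exact h j i (by omega) (by rw [hsym i]; omega)

lemma forall_parts_add_ne_iff (hsym : IsSymmetric μ) {p : ℕ} :
    (∀ i j, μ.parts i + μ.parts j ≠ p + i + j + 1) ↔
      (∀ a, a + p ∈ diagArms μ → a ∈ diagArms μ) ∧
        ∀ a ∈ diagArms μ, ∀ b ∈ diagArms μ, a + b + 1 ≠ p := by
  constructor
  · intro h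
    refine ⟨fun a ⟨d, _, hd⟩ => hsym.mem_diagArms_iff.mpr fun m hm => h d (a + m) (by omega), ?_⟩
    rintro a ⟨d, _, hd⟩ b ⟨e, _, he⟩ hab
    exact h d e (by omega)
  · rintro ⟨hclosed, hpair⟩ i j hij
    wlog hi : i < μ.parts i generalizing i j
    · exact this j i (by omega) (by omega)
    rcases lt_or_ge j (μ.parts j) with hj | hj
    · exact hpair (μ.parts i - i - 1) ⟨i, hi, by omega⟩ (μ.parts j - j - 1) ⟨j, hj, by omega⟩
        (by omega)
    · have := hclosed (j - μ.parts j) ⟨i, hi, by omega⟩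
      exact hsym.mem_diagArms_iff.mp this (μ.parts j) (by rw [Nat.sub_add_cancel hj])

end IsSymmetric

theorem stmt18_general (p : ℕ) (hp : p.Prime)
    (μ : NPartition) (hsym : IsSymmetric μ) :
    IsPCore p μ ↔
      ∀ γ < p, (∃ a ∈ diagArms μ, a % p = γ) →
        GammaPacked p γ μ ∧ ∀ a ∈ diagArms μ, a % p ≠ p - 1 - γ := by
  rw [hsym.isPCore_iff, hsym.forall_parts_add_ne_iff,
    ← forall_isPacked_iff hp.pos μ.diagArms_finite]
  rfl

/-- symmetric `p`-core criterion: a symmetric partition is a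
`p`-core iff for every `γ < p`, having a diagonal hook of arm length
`≡ γ (mod p)` implies being `γ`-packed and having no diagonal hook of arm
length `≡ γ* (mod p)`. -/
theorem stmt18 (p : ℕ) (hp : p.Prime) (hodd : Odd p)
    (μ : NPartition) (hsym : IsSymmetric μ) :
    IsPCore p μ ↔
      ∀ γ < p, (∃ a ∈ diagArms μ, a % p = γ) →
        GammaPacked p γ μ ∧ ∀ a ∈ diagArms μ, a % p ≠ p - 1 - γ :=
  stmt18_general p hp μ hsym
end
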